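/- Let φ be a locally integrable real-valued function on (0,∞) such that for some T ∈ (0,∞) one has liminf_{t→∞} ∫_t^{t+T} φ(τ) dτ > 0 and limsup_{t→∞} ∫_t^{t+T} φ⁻(τ) dτ < ∞. Let ψ be a measurable real-valued function on (0,∞) with ψ(t) → 0 as t → ∞. Suppose ξ is an absolutely continuous non-negative function on (0,∞) satisfying dξ/dt + φ ξ ≤ ψ almost everywhere on (0,∞). Then ξ(t) → 0 as t → ∞. -/

import Mathlib

/-!
Where `ψ ≤ ε` on `[a, b]`, the integrating factor `exp (∫ₐᵗ φ)` turns `ξ' + φ ξ ≤ ψ` into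
`ξ b ≤ ξ a * exp (-∫ₐᵇ φ) + ε (b - a) exp (∫ₐᵇ φ⁻)`. On a window `[t, t + T]` far out the
liminf hypothesis makes the first factor at most `θ := exp (-c) < 1` and the limsup hypothesis
bounds the second by `exp M`, so `ξ (t + T) ≤ θ ξ t + ε T exp M`. Iterating this contraction
gives `limsup ξ ≤ ε T exp M / (1 - θ)`, and `ε` can be taken arbitrarily small since `ψ → 0`.
-/

open MeasureTheory Real Filter Topology Set

theorem LipschitzOnWith.comp_absolutelyContinuousOnInterval {X Y : Type*} [PseudoMetricSpace X]
    [PseudoMetricSpace Y] {h : X → Y} {K : NNReal} {s : Set X} {f : ℝ → X} {a b : ℝ}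
    (hh : LipschitzOnWith K h s) (hf : AbsolutelyContinuousOnInterval f a b)
    (hfs : MapsTo f (uIcc a b) s) : AbsolutelyContinuousOnInterval (h ∘ f) a b := by
  rw [absolutelyContinuousOnInterval_iff] at hf ⊢
  intro ε hε
  obtain ⟨δ, hδ, hfδ⟩ := hf (ε / (K + 1)) (by positivity)
  refine ⟨δ, hδ, fun E hE hEδ => ?_⟩
  calc ∑ i ∈ Finset.range E.1, dist ((h ∘ f) (E.2 i).1) ((h ∘ f) (E.2 i).2)
      ≤ ∑ i ∈ Finset.range E.1, K * dist (f (E.2 i).1) (f (E.2 i).2) :=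
        Finset.sum_le_sum fun i hi =>
          hh.dist_le_mul _ (hfs (hE.1 i hi).1) _ (hfs (hE.1 i hi).2)
    _ = K * ∑ i ∈ Finset.range E.1, dist (f (E.2 i).1) (f (E.2 i).2) := by
        rw [Finset.mul_sum]
    _ ≤ K * (ε / (K + 1)) := by gcongr; exact (hfδ E hE hEδ).le
    _ < ε := by
        rw [mul_div_assoc', div_lt_iff₀ (by positivity)]
        nlinarith

theorem ContDiff.comp_absolutelyContinuousOnInterval {E : Type*} [NormedAddCommGroup E]
    [NormedSpace ℝ E] {h : ℝ → E} {f : ℝ → ℝ} {a b : ℝ} (hh : ContDiff ℝ 1 h)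
    (hf : AbsolutelyContinuousOnInterval f a b) :
    AbsolutelyContinuousOnInterval (h ∘ f) a b := by
  obtain ⟨C, hC⟩ := hf.exists_bound
  obtain ⟨K, hK⟩ :=
    hh.contDiffOn.exists_lipschitzOnWith one_ne_zero (convex_Icc (-C) C) isCompact_Icc
  exact hK.comp_absolutelyContinuousOnInterval hf fun x hx => abs_le.1 (hC x hx)

theorem mul_exp_integral_sub_eq_integral {φ g ξ : ℝ → ℝ} {a b : ℝ}
    (hφ : IntervalIntegrable φ volume a b) (hg : IntervalIntegrable g volume a b)
    (hξ : ∀ x ∈ uIcc a b, ξ x = ξ a + ∫ t in a..x, g t) :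
    ξ b * exp (∫ t in a..b, φ t) - ξ a =
      ∫ t in a..b, (g t + φ t * ξ t) * exp (∫ u in a..t, φ u) := by
  set F : ℝ → ℝ := fun x => ξ a + ∫ t in a..x, g t
  set E : ℝ → ℝ := fun x => exp (∫ u in a..x, φ u)
  have hF : AbsolutelyContinuousOnInterval F a b :=
    (LipschitzWith.const (ξ a)).lipschitzOnWith.absolutelyContinuousOnInterval.add
      (hg.absolutelyContinuousOnInterval_intervalIntegral left_mem_uIcc)
  have hE : AbsolutelyContinuousOnInterval E a b :=
    contDiff_exp.comp_absolutelyContinuousOnInterval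
      (hφ.absolutelyContinuousOnInterval_intervalIntegral left_mem_uIcc)
  have hFE := hF.integral_deriv_mul_eq_sub hE
  rw [show F b = ξ b from (hξ b right_mem_uIcc).symm] at hFE
  simp only [F, E, intervalIntegral.integral_same, add_zero, exp_zero, mul_one] at hFE
  rw [← hFE]
  refine intervalIntegral.integral_congr_ae ?_
  filter_upwards [hg.ae_hasDerivAt_integral, hφ.ae_hasDerivAt_integral] with x hgx hφx hx
  have hx' : x ∈ uIcc a b := uIoc_subset_uIcc hx
  rw [((hgx hx' a left_mem_uIcc).const_add (ξ a)).deriv,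
    ((hφx hx' a left_mem_uIcc).exp).deriv, ← hξ x hx']
  ring

theorem continuousOn_of_forall_eq_add_integral {g ξ : ℝ → ℝ} {a b : ℝ}
    (hg : IntervalIntegrable g volume a b) (hξ : ∀ x ∈ uIcc a b, ξ x = ξ a + ∫ t in a..x, g t) :
    ContinuousOn ξ (uIcc a b) :=
  (continuousOn_const.add
    (hg.absolutelyContinuousOnInterval_intervalIntegral left_mem_uIcc).continuousOn).congr hξ

theorem neg_integral_le_integral_max_neg_zero {φ : ℝ → ℝ} {a b t : ℝ}
    (hφ : IntervalIntegrable φ volume a b) (hat : a ≤ t) (htb : t ≤ b) :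
    -∫ u in t..b, φ u ≤ ∫ u in a..b, max (-φ u) 0 := by
  have hφtb : IntervalIntegrable φ volume t b :=
    hφ.mono_set (uIcc_subset_uIcc (by rw [uIcc_of_le (hat.trans htb)]; exact ⟨hat, htb⟩)
      right_mem_uIcc)
  calc -∫ u in t..b, φ u = ∫ u in t..b, -φ u := intervalIntegral.integral_neg.symm
    _ ≤ ∫ u in t..b, max (-φ u) 0 :=
        intervalIntegral.integral_mono_on htb hφtb.neg ⟨hφtb.1.neg_part, hφtb.2.neg_part⟩
          fun u _ => le_max_left _ _
    _ ≤ ∫ u in a..b, max (-φ u) 0 :=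
        intervalIntegral.integral_mono_interval hat htb le_rfl
          (ae_of_all _ fun u => le_max_right _ _) ⟨hφ.1.neg_part, hφ.2.neg_part⟩

theorem le_mul_exp_neg_integral_add {φ g ξ : ℝ → ℝ} {a b ε : ℝ} (hab : a ≤ b)
    (hφ : IntervalIntegrable φ volume a b) (hg : IntervalIntegrable g volume a b)
    (hξ : ∀ x ∈ uIcc a b, ξ x = ξ a + ∫ t in a..x, g t)
    (hode : ∀ᵐ t ∂volume.restrict (Icc a b), g t + φ t * ξ t ≤ ε) (hε : 0 ≤ ε) :
    ξ b ≤ ξ a * exp (-∫ t in a..b, φ t) + ε * (b - a) * exp (∫ t in a..b, max (-φ t) 0) := by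
  set P := ∫ t in a..b, φ t
  set N := ∫ t in a..b, max (-φ t) 0
  set E : ℝ → ℝ := fun x => exp (∫ u in a..x, φ u)
  have hE : ContinuousOn E (uIcc a b) :=
    continuous_exp.comp_continuousOn
      (hφ.absolutelyContinuousOnInterval_intervalIntegral left_mem_uIcc).continuousOn
  have hEle : ∀ t ∈ Icc a b, E t ≤ exp N * exp P := by
    intro t ht
    have hsplit := intervalIntegral.integral_add_adjacent_intervals
      (hφ.mono_set (uIcc_subset_uIcc left_mem_uIcc (Icc_subset_uIcc ht)))
      (hφ.mono_set (uIcc_subset_uIcc (Icc_subset_uIcc ht) right_mem_uIcc))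
    have := neg_integral_le_integral_max_neg_zero hφ ht.1 ht.2
    rw [← exp_add]
    exact exp_le_exp.2 (by linarith)
  have hint : ∫ t in a..b, (g t + φ t * ξ t) * E t ≤ ∫ t in a..b, ε * (exp N * exp P) := by
    refine intervalIntegral.integral_mono_ae_restrict hab ?_ intervalIntegrable_const ?_
    · have hξc := continuousOn_of_forall_eq_add_integral hg hξ
      exact (hg.add (hφ.mul_continuousOn hξc)).mul_continuousOn hE
    · filter_upwards [hode, ae_restrict_mem measurableSet_Icc] with t ht htab
      exact mul_le_mul ht (hEle t htab) (exp_pos _).le hε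
  have key := mul_exp_integral_sub_eq_integral hφ hg hξ
  rw [intervalIntegral.integral_const, smul_eq_mul] at hint
  refine le_of_mul_le_mul_right ?_ (exp_pos P)
  rw [add_mul, mul_assoc (ξ a), ← exp_add, neg_add_cancel, exp_zero]
  linarith

theorem le_exp_neg_mul_add_of_le_integral {φ g ξ : ℝ → ℝ} {a b c M ε : ℝ} (hab : a ≤ b)
    (hφ : IntervalIntegrable φ volume a b) (hg : IntervalIntegrable g volume a b)
    (hξ : ∀ x ∈ uIcc a b, ξ x = ξ a + ∫ t in a..x, g t)
    (hode : ∀ᵐ t ∂volume.restrict (Icc a b), g t + φ t * ξ t ≤ ε) (hε : 0 ≤ ε)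
    (hξa : 0 ≤ ξ a) (hc : c ≤ ∫ t in a..b, φ t) (hM : ∫ t in a..b, max (-φ t) 0 ≤ M) :
    ξ b ≤ exp (-c) * ξ a + ε * (b - a) * exp M :=
  calc ξ b ≤ ξ a * exp (-∫ t in a..b, φ t) + ε * (b - a) * exp (∫ t in a..b, max (-φ t) 0) :=
        le_mul_exp_neg_integral_add hab hφ hg hξ hode hε
    _ ≤ ξ a * exp (-c) + ε * (b - a) * exp M := by
        have := sub_nonneg.2 hab
        gcongr
    _ = exp (-c) * ξ a + ε * (b - a) * exp M := by ring

theorem MeasureTheory.LocallyIntegrableOn.intervalIntegrable {E : Type*} [NormedAddCommGroup E]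
    {f : ℝ → E} {s : Set ℝ} {a b : ℝ}
    (hf : LocallyIntegrableOn f s) (hab : uIcc a b ⊆ s) : IntervalIntegrable f volume a b :=
  (hf.integrableOn_compact_subset hab isCompact_uIcc).intervalIntegrable

theorem exists_eq_add_nat_mul_of_add_mul_le {t₀ T s : ℝ} {N : ℕ} (hT : 0 < T)
    (hs : t₀ + N * T ≤ s) : ∃ n ≥ N, ∃ t ∈ Icc t₀ (t₀ + T), s = t + n * T := by
  have hq : 0 ≤ (s - t₀) / T := div_nonneg (by nlinarith [N.cast_nonneg (α := ℝ)]) hT.le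
  refine ⟨⌊(s - t₀) / T⌋₊, Nat.le_floor ((le_div_iff₀ hT).2 (by linarith)),
    s - ⌊(s - t₀) / T⌋₊ * T, ⟨?_, ?_⟩, by ring⟩
  · linarith [(le_div_iff₀ hT).1 (Nat.floor_le hq)]
  · have := (div_lt_iff₀ hT).1 (Nat.lt_floor_add_one ((s - t₀) / T))
    linarith

theorem eventually_lt_div_one_sub_add_of_le_mul_add {f : ℝ → ℝ} {t₀ T θ K δ : ℝ}
    (hT : 0 < T) (hθ₀ : 0 ≤ θ) (hθ₁ : θ < 1) (hstep : ∀ t ≥ t₀, f (t + T) ≤ θ * f t + K)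
    (hbdd : BddAbove (f '' Icc t₀ (t₀ + T))) (hδ : 0 < δ) :
    ∀ᶠ t in atTop, f t < K / (1 - θ) + δ := by
  obtain ⟨B, hB⟩ := hbdd
  set D := K / (1 - θ)
  have hD : θ * D + K = D := by
    have : 1 - θ ≠ 0 := (sub_pos.2 hθ₁).ne'
    simp only [D]
    field_simp
    ring
  -- `D` is the fixed point of `x ↦ θ x + K`, so the excess over `D` contracts by `θ` per period.
  have hiter : ∀ n : ℕ, ∀ t ≥ t₀, f (t + n * T) - D ≤ θ ^ n * (f t - D) := by
    intro n
    induction n with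
    | zero => simp
    | succ n ih =>
      intro t ht
      have := hstep (t + n * T) (by nlinarith [n.cast_nonneg (α := ℝ)])
      calc f (t + (n + 1 : ℕ) * T) - D = f (t + n * T + T) - D := by push_cast; ring_nf
        _ ≤ θ * (f (t + n * T) - D) := by linarith
        _ ≤ θ * (θ ^ n * (f t - D)) := mul_le_mul_of_nonneg_left (ih t ht) hθ₀
        _ = θ ^ (n + 1) * (f t - D) := by ring
  have hlim : Tendsto (fun n : ℕ => θ ^ n * (B - D)) atTop (𝓝 0) := by
    simpa using (tendsto_pow_atTop_nhds_zero_of_lt_one hθ₀ hθ₁).mul_const (B - D)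
  obtain ⟨N, hN⟩ := eventually_atTop.1 (hlim.eventually (gt_mem_nhds hδ))
  filter_upwards [eventually_ge_atTop (t₀ + N * T)] with s hs
  obtain ⟨n, hn, t, ht, rfl⟩ := exists_eq_add_nat_mul_of_add_mul_le hT hs
  have hexcess : θ ^ n * (f t - D) ≤ θ ^ n * (B - D) :=
    mul_le_mul_of_nonneg_left (by linarith [hB (mem_image_of_mem f ht)]) (pow_nonneg hθ₀ n)
  linarith [hiter n t ht.1, hN n hn]

theorem tendsto_nhds_zero_of_forall_le_mul_add {f : ℝ → ℝ} {T θ : ℝ} (hT : 0 < T) (hθ₀ : 0 ≤ θ)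
    (hθ₁ : θ < 1) (hf : ∀ᶠ t in atTop, 0 ≤ f t)
    (h : ∀ K > 0, ∃ t₀, BddAbove (f '' Icc t₀ (t₀ + T)) ∧ ∀ t ≥ t₀, f (t + T) ≤ θ * f t + K) :
    Tendsto f atTop (𝓝 0) := by
  refine tendsto_order.2 ⟨fun a ha => hf.mono fun t ht => ha.trans_le ht, fun η hη => ?_⟩
  have hθ : 0 < 1 - θ := sub_pos.2 hθ₁
  obtain ⟨t₀, hbdd, hstep⟩ := h (η * (1 - θ) / 2) (by positivity)
  filter_upwards [eventually_lt_div_one_sub_add_of_le_mul_add hT hθ₀ hθ₁ hstep hbdd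
    (half_pos hη)] with t ht
  have : η * (1 - θ) / 2 / (1 - θ) = η / 2 := by field_simp
  linarith

theorem generalized_gronwall_general (φ ψ ξ g : ℝ → ℝ) (T : ℝ) (hT : 0 < T)
    (hφloc : LocallyIntegrableOn φ (Set.Ioi 0))
    (hliminf : ∃ c : ℝ, 0 < c ∧ ∀ᶠ t in atTop, c ≤ ∫ τ in t..(t + T), φ τ)
    (hlimsup : ∃ M : ℝ, ∀ᶠ t in atTop, (∫ τ in t..(t + T), max (-φ τ) 0) ≤ M)
    (hψ : Tendsto ψ atTop (𝓝 0))
    (hξnonneg : ∀ t ∈ Set.Ioi (0 : ℝ), 0 ≤ ξ t)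
    (hgloc : LocallyIntegrableOn g (Set.Ioi 0))
    (hFTC : ∀ a b : ℝ, 0 < a → a ≤ b → ξ b - ξ a = ∫ τ in a..b, g τ)
    (hODE : ∀ᵐ t ∂(volume.restrict (Set.Ioi (0 : ℝ))), g t + φ t * ξ t ≤ ψ t) :
    Tendsto ξ atTop (𝓝 0) := by
  obtain ⟨c, hc, hwin⟩ := hliminf
  obtain ⟨M, hneg⟩ := hlimsup
  have hwindow {t : ℝ} (ht : 0 < t) : uIcc t (t + T) = Icc t (t + T) := uIcc_of_le (by linarith)
  have hsub {t : ℝ} (ht : 0 < t) : uIcc t (t + T) ⊆ Ioi 0 :=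
    hwindow ht ▸ fun s hs => ht.trans_le hs.1
  have hφ {t : ℝ} (ht : 0 < t) : IntervalIntegrable φ volume t (t + T) :=
    hφloc.intervalIntegrable (hsub ht)
  have hg {t : ℝ} (ht : 0 < t) : IntervalIntegrable g volume t (t + T) :=
    hgloc.intervalIntegrable (hsub ht)
  have hξ {t : ℝ} (ht : 0 < t) : ∀ x ∈ uIcc t (t + T), ξ x = ξ t + ∫ s in t..x, g s :=
    fun x hx => by linarith [hFTC t x ht (hwindow ht ▸ hx).1]
  refine tendsto_nhds_zero_of_forall_le_mul_add hT (exp_pos _).le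
    (exp_lt_one_iff.2 (neg_lt_zero.2 hc)) ((eventually_gt_atTop 0).mono hξnonneg) fun K hK => ?_
  set ε := K / (T * exp M)
  have hε : 0 < ε := by positivity
  have hεK : ε * T * exp M = K := by simp only [ε]; field_simp
  obtain ⟨t₀, ht₀⟩ := eventually_atTop.1 (hwin.and (hneg.and
    ((hψ.eventually (gt_mem_nhds hε)).and (eventually_gt_atTop 0))))
  have ht₀0 : 0 < t₀ := (ht₀ t₀ le_rfl).2.2.2
  refine ⟨t₀, isCompact_Icc.bddAbove_image (hwindow ht₀0 ▸
    continuousOn_of_forall_eq_add_integral (hg ht₀0) (hξ ht₀0)), fun t ht => ?_⟩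
  obtain ⟨hct, hMt, -, ht0⟩ := ht₀ t ht
  have hode : ∀ᵐ s ∂volume.restrict (Icc t (t + T)), g s + φ s * ξ s ≤ ε := by
    filter_upwards [ae_restrict_of_ae_restrict_of_subset (hwindow ht0 ▸ hsub ht0) hODE,
      ae_restrict_mem measurableSet_Icc] with s hs hst
    exact hs.trans (ht₀ s (ht.trans hst.1)).2.2.1.le
  have := le_exp_neg_mul_add_of_le_integral (by linarith) (hφ ht0) (hg ht0) (hξ ht0) hode hε.le
    (hξnonneg t ht0) hct hMt
  rwa [add_sub_cancel_left, hεK] at this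

/-- **Generalized Grönwall lemma** (Foias–Manley–Temam–Trève).
Let `φ` be locally integrable on `(0,∞)` such that for some `T ∈ (0,∞)`,
`liminf_{t→∞} ∫_t^{t+T} φ > 0` and `limsup_{t→∞} ∫_t^{t+T} φ⁻ < ∞`
(where `φ⁻ = max (-φ) 0`).  Let `ψ` be measurable with `ψ(t) → 0` as `t → ∞`.
If `ξ` is an absolutely continuous nonnegative function on `(0,∞)`
(encoded by the fundamental theorem of calculus with a locally integrable
a.e. derivative `g`) satisfying `ξ' + φ ξ ≤ ψ` a.e. on `(0,∞)`, then
`ξ(t) → 0` as `t → ∞`. -/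
theorem generalized_gronwall (φ ψ ξ g : ℝ → ℝ) (T : ℝ) (hT : 0 < T)
    (hφloc : LocallyIntegrableOn φ (Set.Ioi 0))
    (hliminf : ∃ c : ℝ, 0 < c ∧ ∀ᶠ t in atTop, c ≤ ∫ τ in t..(t + T), φ τ)
    (hlimsup : ∃ M : ℝ, ∀ᶠ t in atTop, (∫ τ in t..(t + T), max (-φ τ) 0) ≤ M)
    (hψmeas : Measurable ψ)
    (hψ : Tendsto ψ atTop (𝓝 0))
    (hξnonneg : ∀ t ∈ Set.Ioi (0 : ℝ), 0 ≤ ξ t)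
    (hgloc : LocallyIntegrableOn g (Set.Ioi 0))
    (hFTC : ∀ a b : ℝ, 0 < a → a ≤ b → ξ b - ξ a = ∫ τ in a..b, g τ)
    (hODE : ∀ᵐ t ∂(volume.restrict (Set.Ioi (0 : ℝ))), g t + φ t * ξ t ≤ ψ t) :
    Tendsto ξ atTop (𝓝 0) :=
  generalized_gronwall_general φ ψ ξ g T hT hφloc hliminf hlimsup hψ hξnonneg hgloc hFTC hODE
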